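/- Let {P_{j,m}(ε,t,A)} be a nilpotent secular-coefficient family with renormalized amplitudes 𝒜_j(ε,t,A) = P_{j,0}(ε,t,A). Then: (1) the RG equation ∂_t 𝒜_j(ε,t,A) = [∂_s P_{j,0}(ε, s, 𝒜(ε,t,A))] evaluated at s = 0 holds for all 1 ≤ j ≤ n, as an identity in ℂ[t,A][[ε]]; (2) the right-hand side equals 𝒜_{j+1}(ε,t,A) plus a series divisible by ε, where 𝒜_{n+1} := 0 (so the RG dynamics is not slow in general); (3) the inversion relation P_{j,0}(ε, −t, 𝒜(ε,t,A)) = A_j holds in ℂ[t,A][[ε]]. -/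

import Mathlib

/-! The heart of the proof is the semigroup property
`P_{j,0}(ε, s, 𝒜(ε,t,A)) = P_{j,0}(ε, t + s, A)`. Substituting `(s, 𝒜(ε,t,A))`, respectively
`t + s`, into every Fourier coefficient of the family produces two families that solve the same
system `∂_s y = Λ y + ε V(ε, e^{±it}, y)` mode by mode, and both reduce to `P_{j,0}(ε, t, A)`
at `s = 0` because `P_{j,0}(ε, 0, A) = A_j` by (b) and (c). Such a solution is unique: at each
order in `ε` the nonlinearity only involves lower orders, the nilpotent coupling is resolved from
the last component down, a mode `m ≠ 0` solves `∂_s a + i m a = 0` and hence vanishes (compare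
`s`-degrees), and the mode `0` is independent of `s`, hence fixed by its value at `s = 0`.
Differentiating the semigroup property at `s = 0` gives the RG equation, the mode-`0` equation
shows that its right-hand side is `𝒜_{j+1} + O(ε)`, and evaluating at `s = -t` gives the
inversion relation. -/

noncomputable section

open Polynomial

/-- Finite `R`-linear combinations of Fourier modes `e^{i m t}` (`m : ℤ`):
the mode-`m` coefficient of `x` is `x m : R`. -/
abbrev ModeRing (R : Type) [CommRing R] : Type := AddMonoidAlgebra R ℤ

/-- Formal power series in `ε` whose coefficients are finite Fourier sums with
coefficients in `R`. -/
abbrev EpsSeries (R : Type) [CommRing R] : Type := PowerSeries (ModeRing R)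

/-- The mode `e^{i t}`, as a unit of `EpsSeries R` (inverse `e^{-i t}`). -/
def zUnit (R : Type) [CommRing R] : (EpsSeries R)ˣ where
  val := PowerSeries.C (AddMonoidAlgebra.single 1 1)
  inv := PowerSeries.C (AddMonoidAlgebra.single (-1) 1)
  val_inv := by
    rw [← map_mul, AddMonoidAlgebra.single_mul_single]
    norm_num [AddMonoidAlgebra.one_def]
  inv_val := by
    rw [← map_mul, AddMonoidAlgebra.single_mul_single]
    norm_num [AddMonoidAlgebra.one_def]

/-- Evaluation of a Laurent polynomial in `z` (an element of `ℂ[z,z⁻¹] = AddMonoidAlgebra ℂ ℤ`)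
at `z = e^{i t}`, landing in `EpsSeries R`. -/
def zEval (R : Type) [CommRing R] [Algebra ℂ R] : AddMonoidAlgebra ℂ ℤ →+* EpsSeries R :=
  AddMonoidAlgebra.liftNCRingHom
    (PowerSeries.C.comp (AddMonoidAlgebra.singleZeroRingHom.comp (algebraMap ℂ R)))
    ((Units.coeHom _).comp (zpowersHom _ (zUnit R)))
    (fun _ _ => Commute.all _ _)

/-- Evaluation of `V ∈ ℂ[ε, z, z⁻¹, y₁, …, yₙ]` (encoded as a polynomial in the `y`-variables
with coefficients in `ℂ[z,z⁻¹][ε]`) at `z = e^{i t}`, `ε = ε` (the power series variable)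
and given formal series values of the `y`-variables. -/
def VEval {n : ℕ} (R : Type) [CommRing R] [Algebra ℂ R]
    (V : MvPolynomial (Fin n) (Polynomial (AddMonoidAlgebra ℂ ℤ)))
    (y : Fin n → EpsSeries R) : EpsSeries R :=
  MvPolynomial.eval₂ (Polynomial.eval₂RingHom (zEval R) PowerSeries.X) y V

/-- The polynomial ring `ℂ[t, A₁, …, Aₙ]`: the variable `none` is `t`, `some i` is `Aᵢ`. -/
abbrev AmpRing (n : ℕ) : Type := MvPolynomial (Option (Fin n)) ℂ

/-- The secular coefficient `P_{j,m}(ε,t,A) ∈ ℂ[t,A][[ε]]` of a family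
`Q j = Σ_k ε^k Σ_m P_{j,m}^{(k)} e^{imt}`. -/
def Pc {n : ℕ} (Q : Fin n → EpsSeries (AmpRing n)) (j : Fin n) (m : ℤ) :
    PowerSeries (AmpRing n) :=
  PowerSeries.mk fun k => (PowerSeries.coeff (R := (ModeRing (AmpRing n))) k (Q j)).coeff m

/-- The polynomial ring `ℂ[t, s, A₁, …, Aₙ]`: `none` is `t`, `some none` is `s`,
`some (some i)` is `Aᵢ`. -/
abbrev AmpRing2 (n : ℕ) : Type := MvPolynomial (Option (Option (Fin n))) ℂ

/-- The inclusion `ℂ[t,A] → ℂ[t,s,A]`. -/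
def embedTA {n : ℕ} : AmpRing n →+* AmpRing2 n :=
  (MvPolynomial.rename (Option.map (some : Fin n → Option (Fin n)))).toRingHom

/-- The map `ℂ[t,A] → ℂ[t,s,A]` renaming `t` to `s`. -/
def renameTS {n : ℕ} : AmpRing n →+* AmpRing2 n :=
  (MvPolynomial.rename
    (fun v : Option (Fin n) => Option.elim v (some none) (fun i => some (some i)))).toRingHom

/-- Substitution of power series (with nontrivial `ε⁰`-part) for the coefficient variables of a
power series: `(substSeries φ p) = Σ_k ε^k · φ(coeff_k p)`; at each `ε`-order this is a finite
sum. -/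
def substSeries {R R' : Type} [CommRing R] [CommRing R'] (φ : R →+* PowerSeries R')
    (p : PowerSeries R) : PowerSeries R' :=
  PowerSeries.mk fun K => ∑ k ∈ Finset.range (K + 1),
    PowerSeries.coeff (R := R') (K - k) (φ (PowerSeries.coeff (R := R) k p))


/-- `g(t,A) = Σ_{k=1}^{n} A_k t^{k-1}/(k-1)!` as an element of `ℂ[t,A]` (here `0`-indexed:
`g = Σ_{k : Fin n} A_k t^k / k!`). -/
def gMv (n : ℕ) : AmpRing n :=
  ∑ k : Fin n, MvPolynomial.C ((1 : ℂ) / ((k : ℕ).factorial : ℂ))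
    * MvPolynomial.X (some k) * MvPolynomial.X (none : Option (Fin n)) ^ (k : ℕ)

/-- The `(j+1)`-st secular coefficient, with the convention `P_{n+1,m} := 0`. -/
def PcNext {n : ℕ} (Q : Fin n → EpsSeries (AmpRing n)) (j : Fin n) (m : ℤ) :
    PowerSeries (AmpRing n) :=
  if h : (j : ℕ) + 1 < n then Pc Q ⟨(j : ℕ) + 1, h⟩ m else 0

/-- A nilpotent secular-coefficient family for `dy/dt = Λ y + ε V(ε,e^{±it},y)`, `Λ` the upper
Jordan nilpotent block:
(a) at each `ε`-order only finitely many modes are nonzero (built into `ModeRing`);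
(b) the `ε⁰`-coefficient of `P_{j,m}` is `δ_{m,0} d^{j-1}g/dt^{j-1}`;
(c) for `k ≥ 1` the `ε^k`-coefficient of the resonant `P_{j,0}` vanishes at `t = 0`;
(d) order by order in `ε` and mode by mode in `e^{imt}`:
`∂_t P_{j,m} + i m P_{j,m} = P_{j+1,m} + [ε V_j(ε, e^{±it}, Σ_l P_{·,l} e^{ilt})]_{e^{imt}}`. -/
structure IsNilpotentSecularFamily {n : ℕ}
    (V : Fin n → MvPolynomial (Fin n) (Polynomial (AddMonoidAlgebra ℂ ℤ)))
    (Q : Fin n → EpsSeries (AmpRing n)) : Prop where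
  coeff_zero : ∀ j : Fin n, PowerSeries.coeff (R := (ModeRing (AmpRing n))) 0 (Q j)
      = AddMonoidAlgebra.single 0 ((fun p => MvPolynomial.pderiv none p)^[(j : ℕ)] (gMv n))
  resonant_vanish : ∀ (j : Fin n) (k : ℕ), 1 ≤ k →
    MvPolynomial.aeval
      (fun v : Option (Fin n) => Option.elim v (0 : AmpRing n) (fun i => MvPolynomial.X (some i)))
      ((PowerSeries.coeff (R := (ModeRing (AmpRing n))) k (Q j)).coeff 0) = 0
  ode : ∀ (j : Fin n) (m : ℤ),
    (PowerSeries.mk fun k =>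
        MvPolynomial.pderiv none ((PowerSeries.coeff (R := (ModeRing (AmpRing n))) k (Q j)).coeff m))
      + PowerSeries.C (MvPolynomial.C (Complex.I * (m : ℂ))) * Pc Q j m
      = PcNext Q j m
        + PowerSeries.mk fun k =>
            (PowerSeries.coeff (R := (ModeRing (AmpRing n))) k
              (PowerSeries.X * VEval (AmpRing n) (V j) Q)).coeff m

/-- Coefficientwise `∂_t` on `ℂ[t,A][[ε]]`. -/
def dT {n : ℕ} (p : PowerSeries (AmpRing n)) : PowerSeries (AmpRing n) :=
  PowerSeries.mk fun k => MvPolynomial.pderiv none (PowerSeries.coeff (R := (AmpRing n)) k p)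

/-- Coefficientwise `∂_s` on `ℂ[t,s,A][[ε]]`. -/
def dS {n : ℕ} (p : PowerSeries (AmpRing2 n)) : PowerSeries (AmpRing2 n) :=
  PowerSeries.mk fun k => MvPolynomial.pderiv (some none) (PowerSeries.coeff (R := (AmpRing2 n)) k p)

/-- Evaluation `s := 0`, a ring map `ℂ[t,s,A] → ℂ[t,A]`. -/
def evalS0 {n : ℕ} : AmpRing2 n →+* AmpRing n :=
  MvPolynomial.eval₂Hom MvPolynomial.C
    (fun v : Option (Option (Fin n)) => Option.elim v (MvPolynomial.X none)
      (fun w => Option.elim w 0 (fun i => MvPolynomial.X (some i))))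

/-- The substitution `t ↦ s`, `A_i ↦ 𝒜_i(ε,t,A) = P_{i,0}(ε,t,A)`, as a ring map
`ℂ[t,A] → ℂ[t,s,A][[ε]]`. -/
def substSA0 {n : ℕ} (Q : Fin n → EpsSeries (AmpRing n)) :
    AmpRing n →+* PowerSeries (AmpRing2 n) :=
  MvPolynomial.eval₂Hom ((PowerSeries.C (R := AmpRing2 n)).comp MvPolynomial.C)
    (fun v : Option (Fin n) => Option.elim v
      (PowerSeries.C (MvPolynomial.X (some none)))
      (fun i => PowerSeries.map embedTA (Pc Q i 0)))

/-- The substitution `t ↦ -t`, `A_i ↦ 𝒜_i(ε,t,A)`, as a ring map `ℂ[t,A] → ℂ[t,A][[ε]]`. -/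
def substInv0 {n : ℕ} (Q : Fin n → EpsSeries (AmpRing n)) :
    AmpRing n →+* PowerSeries (AmpRing n) :=
  MvPolynomial.eval₂Hom ((PowerSeries.C (R := AmpRing n)).comp MvPolynomial.C)
    (fun v : Option (Fin n) => Option.elim v
      (PowerSeries.C (-MvPolynomial.X none))
      (fun i => Pc Q i 0))

section SubstSeries

variable {R R' R'' : Type} [CommRing R] [CommRing R'] [CommRing R'']

theorem coeff_substSeries (φ : R →+* PowerSeries R') (p : PowerSeries R) (K : ℕ) :
    PowerSeries.coeff K (substSeries φ p)
      = ∑ k ∈ Finset.range (K + 1), PowerSeries.coeff (K - k) (φ (PowerSeries.coeff k p)) :=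
  PowerSeries.coeff_mk _ _

theorem substSeries_add (φ : R →+* PowerSeries R') (p q : PowerSeries R) :
    substSeries φ (p + q) = substSeries φ p + substSeries φ q := by
  ext K
  simp [coeff_substSeries, Finset.sum_add_distrib]

theorem substSeries_sub (φ : R →+* PowerSeries R') (p q : PowerSeries R) :
    substSeries φ (p - q) = substSeries φ p - substSeries φ q := by
  ext K
  simp [coeff_substSeries, Finset.sum_sub_distrib]

theorem substSeries_zero (φ : R →+* PowerSeries R') : substSeries φ 0 = 0 := by
  ext K
  simp [coeff_substSeries]

theorem substSeries_coe (φ : R →+* PowerSeries R') (f : Polynomial R) :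
    substSeries φ f = f.eval₂ φ PowerSeries.X := by
  induction f using Polynomial.induction_on' with
  | add p q hp hq => rw [Polynomial.coe_add, substSeries_add, hp, hq, Polynomial.eval₂_add]
  | monomial i a =>
    ext K
    rw [coeff_substSeries, Polynomial.eval₂_monomial, PowerSeries.coeff_mul_X_pow']
    simp only [Polynomial.coeff_coe, Polynomial.coeff_monomial, apply_ite φ,
      apply_ite (PowerSeries.coeff _), map_zero, Finset.sum_ite_eq, Finset.mem_range,
      Nat.lt_succ_iff]

theorem X_pow_dvd_substSeries (φ : R →+* PowerSeries R') {N : ℕ} {p : PowerSeries R}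
    (h : PowerSeries.X ^ N ∣ p) : PowerSeries.X ^ N ∣ substSeries φ p := by
  rw [PowerSeries.X_pow_dvd_iff] at h ⊢
  intro K hK
  rw [coeff_substSeries]
  refine Finset.sum_eq_zero fun k hk => ?_
  rw [h k (by rw [Finset.mem_range] at hk; omega), map_zero, map_zero]

theorem X_pow_dvd_sub_trunc (N : ℕ) (p : PowerSeries R) :
    PowerSeries.X ^ N ∣ p - (PowerSeries.trunc N p : PowerSeries R) := by
  rw [PowerSeries.X_pow_dvd_iff]
  intro m hm
  rw [map_sub, Polynomial.coeff_coe, PowerSeries.coeff_trunc, if_pos hm, sub_self]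

theorem substSeries_mul (φ : R →+* PowerSeries R') (p q : PowerSeries R) :
    substSeries φ (p * q) = substSeries φ p * substSeries φ q := by
  ext K
  -- Modulo `ε^(K+1)` both sides only see the truncations of `p` and `q`, which are polynomials.
  set tp : PowerSeries R := ↑(PowerSeries.trunc (K + 1) p)
  set tq : PowerSeries R := ↑(PowerSeries.trunc (K + 1) q)
  have hsub : ∀ a b : PowerSeries R, PowerSeries.X ^ (K + 1) ∣ a - b →
      PowerSeries.X ^ (K + 1) ∣ substSeries φ a - substSeries φ b := fun a b h => by
    rw [← substSeries_sub]
    exact X_pow_dvd_substSeries φ h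
  have hp : PowerSeries.X ^ (K + 1) ∣ p - tp := X_pow_dvd_sub_trunc (K + 1) p
  have hq : PowerSeries.X ^ (K + 1) ∣ q - tq := X_pow_dvd_sub_trunc (K + 1) q
  have htrunc : substSeries φ (tp * tq) = substSeries φ tp * substSeries φ tq := by
    rw [← Polynomial.coe_mul, substSeries_coe, substSeries_coe, substSeries_coe,
      Polynomial.eval₂_mul]
  have h1 := hsub _ _ (dvd_mul_sub_mul hp hq)
  have h2 := dvd_mul_sub_mul (hsub _ _ hp) (hsub _ _ hq)
  rw [htrunc] at h1
  have h := PowerSeries.X_pow_dvd_iff.mp (dvd_sub h1 h2) K (Nat.lt_succ_self K)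
  rwa [sub_sub_sub_cancel_right, map_sub, sub_eq_zero] at h

theorem substSeries_one (φ : R →+* PowerSeries R') : substSeries φ 1 = 1 := by
  rw [← Polynomial.coe_one, substSeries_coe, Polynomial.eval₂_one]

theorem substSeries_C (φ : R →+* PowerSeries R') (r : R) :
    substSeries φ (PowerSeries.C r) = φ r := by
  rw [← Polynomial.coe_C, substSeries_coe, Polynomial.eval₂_C]

theorem substSeries_X (φ : R →+* PowerSeries R') :
    substSeries φ PowerSeries.X = PowerSeries.X := by
  rw [← Polynomial.coe_X, substSeries_coe, Polynomial.eval₂_X]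

def substSeriesHom (φ : R →+* PowerSeries R') : PowerSeries R →+* PowerSeries R' where
  toFun := substSeries φ
  map_one' := substSeries_one φ
  map_mul' := substSeries_mul φ
  map_zero' := substSeries_zero φ
  map_add' := substSeries_add φ

@[simp]
theorem substSeriesHom_apply (φ : R →+* PowerSeries R') (p : PowerSeries R) :
    substSeriesHom φ p = substSeries φ p := rfl

theorem PowerSeries.map_map (f : R →+* R') (g : R' →+* R'') (p : PowerSeries R) :
    PowerSeries.map g (PowerSeries.map f p) = PowerSeries.map (g.comp f) p := by
  rw [PowerSeries.map_comp, RingHom.comp_apply]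

theorem map_substSeries (φ : R →+* PowerSeries R') (ρ : R' →+* R'') (p : PowerSeries R) :
    PowerSeries.map ρ (substSeries φ p) = substSeries ((PowerSeries.map ρ).comp φ) p := by
  ext K
  simp [coeff_substSeries]

theorem substSeries_comp (φ : R' →+* PowerSeries R'') (f : R →+* R') (p : PowerSeries R) :
    substSeries (φ.comp f) p = substSeries φ (PowerSeries.map f p) := by
  ext K
  simp [coeff_substSeries]

theorem substSeries_C_comp (f : R →+* R') (p : PowerSeries R) :
    substSeries (PowerSeries.C.comp f) p = PowerSeries.map f p := by
  ext K
  rw [coeff_substSeries, Finset.sum_eq_single K]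
  · simp
  · intro k hk hkK
    rw [RingHom.comp_apply, PowerSeries.coeff_C, if_neg (by rw [Finset.mem_range] at hk; omega)]
  · simp

end SubstSeries

section CoefficientwiseDerivation

variable {S A : Type} [CommRing S] [CommRing A] [Algebra S A]

def Derivation.mapPowerSeries (d : Derivation S A A) :
    Derivation S (PowerSeries A) (PowerSeries A) :=
  Derivation.mk'
    { toFun := fun p => PowerSeries.mk fun k => d (PowerSeries.coeff k p)
      map_add' := fun p q => by ext k; simp
      map_smul' := fun c p => by ext k; simp }
    fun p q => by
      ext k
      simp only [LinearMap.coe_mk, AddHom.coe_mk, smul_eq_mul, map_add, PowerSeries.coeff_mk]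
      rw [mul_comm q, PowerSeries.coeff_mul, PowerSeries.coeff_mul, PowerSeries.coeff_mul,
        map_sum, ← Finset.sum_add_distrib]
      refine Finset.sum_congr rfl fun ij _ => ?_
      simp [Derivation.leibniz, smul_eq_mul, mul_comm]

theorem Derivation.coeff_mapPowerSeries (d : Derivation S A A) (p : PowerSeries A) (k : ℕ) :
    PowerSeries.coeff k (d.mapPowerSeries p) = d (PowerSeries.coeff k p) := by
  simp [Derivation.mapPowerSeries]

theorem Derivation.mapPowerSeries_C (d : Derivation S A A) (a : A) :
    d.mapPowerSeries (PowerSeries.C a) = PowerSeries.C (d a) := by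
  ext k
  rw [Derivation.coeff_mapPowerSeries, PowerSeries.coeff_C, PowerSeries.coeff_C]
  split_ifs <;> simp

end CoefficientwiseDerivation

theorem Derivation.apply_comp_eq_comp_pderiv {σ R B : Type} [CommRing R] [CommRing B]
    [Algebra R B] (D : Derivation R B B) (φ : MvPolynomial σ R →+* B)
    (hC : ∀ c, φ (MvPolynomial.C c) = algebraMap R B c) (u : σ)
    (hX : ∀ v, D (φ (MvPolynomial.X v)) = φ (MvPolynomial.pderiv u (MvPolynomial.X v)))
    (p : MvPolynomial σ R) : D (φ p) = φ (MvPolynomial.pderiv u p) := by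
  induction p using MvPolynomial.induction_on with
  | C c => rw [hC, Derivation.map_algebraMap, MvPolynomial.pderiv_C, map_zero]
  | add p q hp hq => rw [map_add, map_add, hp, hq, map_add, map_add]
  | mul_X p v hp =>
    rw [map_mul, Derivation.leibniz, hX, hp, Derivation.leibniz, smul_eq_mul, smul_eq_mul,
      smul_eq_mul, smul_eq_mul, map_add, map_mul, map_mul]

section FourierModes

variable {R R' : Type} [CommRing R] [CommRing R']

def modeSeries (x : EpsSeries R) (m : ℤ) : PowerSeries R :=
  PowerSeries.mk fun k => (PowerSeries.coeff k x).coeff m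

theorem coeff_modeSeries (x : EpsSeries R) (m : ℤ) (k : ℕ) :
    PowerSeries.coeff k (modeSeries x m) = (PowerSeries.coeff k x).coeff m :=
  PowerSeries.coeff_mk _ _

theorem Pc_eq_modeSeries {n : ℕ} (Q : Fin n → EpsSeries (AmpRing n)) (j : Fin n) (m : ℤ) :
    Pc Q j m = modeSeries (Q j) m := rfl

theorem modeSeries_X_mul (x : EpsSeries R) (m : ℤ) :
    modeSeries (PowerSeries.X * x) m = PowerSeries.X * modeSeries x m := by
  refine PowerSeries.ext fun k => ?_
  rcases k with _ | k
  · rw [coeff_modeSeries, PowerSeries.coeff_zero_X_mul, PowerSeries.coeff_zero_X_mul]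
    rfl
  · rw [coeff_modeSeries, PowerSeries.coeff_succ_X_mul, PowerSeries.coeff_succ_X_mul,
      coeff_modeSeries]

/-- The extension of `φ : R → R'⟦ε⟧` to Fourier sums, `Σ_m r_m e^{imt} ↦ Σ_m φ(r_m) e^{imt}`. -/
def modeSubst (φ : R →+* PowerSeries R') : ModeRing R →+* EpsSeries R' :=
  AddMonoidAlgebra.liftNCRingHom
    ((PowerSeries.map AddMonoidAlgebra.singleZeroRingHom).comp φ)
    ((PowerSeries.C (R := ModeRing R')).toMonoidHom.comp (AddMonoidAlgebra.of R' ℤ))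
    (fun _ _ => Commute.all _ _)

theorem modeSubst_single (φ : R →+* PowerSeries R') (m : ℤ) (r : R) :
    modeSubst φ (AddMonoidAlgebra.single m r)
      = PowerSeries.map AddMonoidAlgebra.singleZeroRingHom (φ r)
        * PowerSeries.C (AddMonoidAlgebra.single m 1) :=
  AddMonoidAlgebra.liftNC_single _ _ _ _

theorem coeff_modeSubst (φ : R →+* PowerSeries R') (x : ModeRing R) (l : ℕ) (m : ℤ) :
    (PowerSeries.coeff l (modeSubst φ x)).coeff m = PowerSeries.coeff l (φ (x.coeff m)) := by
  classical
  induction x using AddMonoidAlgebra.induction_linear with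
  | zero => simp
  | add a b ha hb => simp [ha, hb]
  | single m' r =>
    have h0 : (AddMonoidAlgebra.singleZeroRingHom (PowerSeries.coeff l (φ r)) : ModeRing R')
        = AddMonoidAlgebra.single 0 (PowerSeries.coeff l (φ r)) := rfl
    rw [modeSubst_single, PowerSeries.coeff_mul_C, PowerSeries.coeff_map, h0,
      AddMonoidAlgebra.single_mul_single, zero_add, mul_one, AddMonoidAlgebra.coeff_single,
      AddMonoidAlgebra.coeff_single, Finsupp.single_apply, Finsupp.single_apply, apply_ite φ,
      map_zero, apply_ite (PowerSeries.coeff l), map_zero]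

def substModes (φ : R →+* PowerSeries R') : EpsSeries R →+* EpsSeries R' :=
  substSeriesHom (modeSubst φ)

theorem modeSeries_substModes (φ : R →+* PowerSeries R') (x : EpsSeries R) (m : ℤ) :
    modeSeries (substModes φ x) m = substSeries φ (modeSeries x m) := by
  ext K
  simp only [substModes, substSeriesHom_apply, coeff_modeSeries, coeff_substSeries,
    AddMonoidAlgebra.coeff_sum, Finsupp.finsetSum_apply, coeff_modeSubst]

theorem substModes_C_single (φ : R →+* PowerSeries R') (m : ℤ) (r : R) (r' : R')
    (h : φ r = PowerSeries.C r') :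
    substModes φ (PowerSeries.C (AddMonoidAlgebra.single m r))
      = PowerSeries.C (AddMonoidAlgebra.single m r') := by
  have h0 : (AddMonoidAlgebra.singleZeroRingHom r' : ModeRing R')
      = AddMonoidAlgebra.single 0 r' := rfl
  rw [substModes, substSeriesHom_apply, substSeries_C, modeSubst_single, h, PowerSeries.map_C,
    ← map_mul, h0, AddMonoidAlgebra.single_mul_single, zero_add, mul_one]

theorem substModes_X (φ : R →+* PowerSeries R') :
    substModes φ PowerSeries.X = PowerSeries.X :=
  substSeries_X _

theorem val_zUnit_zpow (m : ℤ) :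
    ((zUnit R ^ m : (EpsSeries R)ˣ) : EpsSeries R)
      = PowerSeries.C (AddMonoidAlgebra.single m 1) := by
  have hval : ((zUnit R : (EpsSeries R)ˣ) : EpsSeries R)
      = PowerSeries.C (AddMonoidAlgebra.single 1 1) := rfl
  have hinv : (((zUnit R)⁻¹ : (EpsSeries R)ˣ) : EpsSeries R)
      = PowerSeries.C (AddMonoidAlgebra.single (-1) 1) := rfl
  induction m using Int.induction_on with
  | zero => rw [zpow_zero, Units.val_one, ← AddMonoidAlgebra.one_def, map_one]
  | succ m ih =>
    rw [zpow_add_one, Units.val_mul, ih, hval, ← map_mul, AddMonoidAlgebra.single_mul_single,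
      mul_one]
  | pred m ih =>
    rw [zpow_sub_one, Units.val_mul, ih, hinv, ← map_mul, AddMonoidAlgebra.single_mul_single,
      mul_one, ← sub_eq_add_neg]

variable [Algebra ℂ R] [Algebra ℂ R']

theorem zEval_single (m : ℤ) (c : ℂ) :
    zEval R (AddMonoidAlgebra.single m c)
      = PowerSeries.C (AddMonoidAlgebra.single m (algebraMap ℂ R c)) := by
  rw [zEval, AddMonoidAlgebra.liftNCRingHom_single]
  change PowerSeries.C (AddMonoidAlgebra.single 0 (algebraMap ℂ R c))
    * ((zUnit R ^ m : (EpsSeries R)ˣ) : EpsSeries R) = _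
  rw [val_zUnit_zpow, ← map_mul, AddMonoidAlgebra.single_mul_single, zero_add, mul_one]

theorem substModes_comp_zEval (φ : R →+* PowerSeries R')
    (hC : ∀ c : ℂ, φ (algebraMap ℂ R c) = PowerSeries.C (algebraMap ℂ R' c)) :
    (substModes φ).comp (zEval R) = zEval R' := by
  refine AddMonoidAlgebra.ringHom_ext (fun c => ?_) (fun m => ?_) <;>
  rw [RingHom.comp_apply, zEval_single, zEval_single, substModes_C_single _ _ _ _ (hC _)]

theorem substModes_VEval {n : ℕ} (φ : R →+* PowerSeries R')
    (hC : ∀ c : ℂ, φ (algebraMap ℂ R c) = PowerSeries.C (algebraMap ℂ R' c))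
    (V : MvPolynomial (Fin n) (Polynomial (AddMonoidAlgebra ℂ ℤ))) (y : Fin n → EpsSeries R) :
    substModes φ (VEval R V y) = VEval R' V (fun i => substModes φ (y i)) := by
  rw [VEval, MvPolynomial.eval₂_comp_left, VEval]
  congr 1
  refine Polynomial.ringHom_ext (fun a => ?_) ?_
  · simpa using RingHom.congr_fun (substModes_comp_zEval φ hC) a
  · simpa using substModes_X φ

variable (R) in
theorem X_pow_dvd_VEval_sub {n N : ℕ}
    (V : MvPolynomial (Fin n) (Polynomial (AddMonoidAlgebra ℂ ℤ))) {y y' : Fin n → EpsSeries R}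
    (h : ∀ i, PowerSeries.X ^ N ∣ y i - y' i) :
    PowerSeries.X ^ N ∣ VEval R V y - VEval R V y' := by
  rw [← Ideal.mem_span_singleton, ← Ideal.Quotient.eq, VEval, VEval,
    MvPolynomial.eval₂_comp_left, MvPolynomial.eval₂_comp_left]
  congr 1
  funext i
  exact Ideal.Quotient.eq.mpr (Ideal.mem_span_singleton.mpr (h i))

end FourierModes

theorem Fin.decreasingInduction {n : ℕ} {P : Fin n → Prop}
    (step : ∀ j : Fin n, (∀ h : (j : ℕ) + 1 < n, P ⟨j + 1, h⟩) → P j) (j : Fin n) : P j := by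
  suffices h : ∀ k ≤ n, ∀ hk : k < n, P ⟨k, hk⟩ from h j j.isLt.le j.isLt
  exact fun k hk => Nat.decreasingInduction (motive := fun k _ => ∀ hk : k < n, P ⟨k, hk⟩)
    (fun k _ ih h => step ⟨k, h⟩ ih) (fun h => absurd h (lt_irrefl n)) hk

section PartialDerivatives

variable {σ : Type}

theorem eq_zero_of_pderiv_add_C_mul_eq_zero {u : σ} {c : ℂ} (hc : c ≠ 0)
    {p : MvPolynomial σ ℂ} (h : MvPolynomial.pderiv u p + MvPolynomial.C c * p = 0) : p = 0 := by
  classical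
  have hcoeff : ∀ d, MvPolynomial.coeff d p
      = -c⁻¹ * (MvPolynomial.coeff (d + Finsupp.single u 1) p * (d u + 1)) := by
    intro d
    have hd := congrArg (MvPolynomial.coeff d) h
    rw [MvPolynomial.coeff_add, MvPolynomial.coeff_pderiv, MvPolynomial.coeff_C_mul,
      MvPolynomial.coeff_zero] at hd
    field_simp
    linear_combination hd
  -- Descend from the top `u`-degree: each coefficient is a multiple of one of higher `u`-degree.
  have key : ∀ k d, MvPolynomial.degreeOf u p < d u + k → MvPolynomial.coeff d p = 0 := by
    intro k
    induction k with
    | zero =>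
      intro d hd
      by_contra hne
      have := MvPolynomial.monomial_le_degreeOf u (MvPolynomial.mem_support_iff.mpr hne)
      omega
    | succ k ih =>
      intro d hd
      rw [hcoeff d, ih (d + Finsupp.single u 1) (by simp; omega), zero_mul, mul_zero]
  ext d
  exact key (MvPolynomial.degreeOf u p + 1) d (by omega)

theorem notMem_vars_of_pderiv_eq_zero {u : σ} {p : MvPolynomial σ ℂ}
    (h : MvPolynomial.pderiv u p = 0) : u ∉ p.vars := by
  classical
  intro hu
  obtain ⟨d, hd, hud⟩ := (MvPolynomial.mem_vars_iff_mem_support u).mp hu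
  have hle : Finsupp.single u 1 ≤ d := by
    rwa [Finsupp.single_le_iff, Nat.one_le_iff_ne_zero, ← Finsupp.mem_support_iff]
  have hc := congrArg (MvPolynomial.coeff (d - Finsupp.single u 1)) h
  rw [MvPolynomial.coeff_pderiv, tsub_add_cancel_of_le hle, MvPolynomial.coeff_zero] at hc
  exact MvPolynomial.mem_support_iff.mp hd ((mul_eq_zero.mp hc).resolve_right (by norm_cast))

def evalVarZero [DecidableEq σ] (u : σ) : MvPolynomial σ ℂ →+* MvPolynomial σ ℂ :=
  MvPolynomial.eval₂Hom MvPolynomial.C (Function.update MvPolynomial.X u 0)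

theorem evalVarZero_eq_self_of_pderiv_eq_zero [DecidableEq σ] {u : σ} {p : MvPolynomial σ ℂ}
    (h : MvPolynomial.pderiv u p = 0) : evalVarZero u p = p := by
  refine MvPolynomial.hom_congr_vars (f₂ := RingHom.id _) ?_ (fun v hv _ => ?_) rfl
  · ext c
    simp [evalVarZero]
  · have hvu : v ≠ u := fun hvu => notMem_vars_of_pderiv_eq_zero h (hvu ▸ hv)
    simp [evalVarZero, hvu]

end PartialDerivatives

section ModewiseSolutions

variable {n : ℕ} (V : Fin n → MvPolynomial (Fin n) (Polynomial (AddMonoidAlgebra ℂ ℤ)))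
  {σ τ : Type}

/-- `F` solves `∂_u y = Λ y + ε V(ε, e^{±it}, y)` order by order in `ε` and mode by mode, where
the mode `e^{imt}` contributes `i m` to the derivative. -/
def IsModewiseSolution (u : σ) (F : Fin n → EpsSeries (MvPolynomial σ ℂ)) : Prop :=
  ∀ (j : Fin n) (m : ℤ),
    (MvPolynomial.pderiv u).mapPowerSeries (modeSeries (F j) m)
        + PowerSeries.C (MvPolynomial.C (Complex.I * m)) * modeSeries (F j) m
      = (if h : (j : ℕ) + 1 < n then modeSeries (F ⟨j + 1, h⟩) m else 0)
        + modeSeries (PowerSeries.X * VEval _ (V j) F) m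

variable {V}

theorem IsNilpotentSecularFamily.isModewiseSolution {Q : Fin n → EpsSeries (AmpRing n)}
    (hQ : IsNilpotentSecularFamily V Q) : IsModewiseSolution V none Q := by
  intro j m
  convert hQ.ode j m using 2
  · ext k
    rw [Derivation.coeff_mapPowerSeries, coeff_modeSeries, PowerSeries.coeff_mk]
  all_goals rfl

theorem IsModewiseSolution.coeff_eq {u : σ} {F : Fin n → EpsSeries (MvPolynomial σ ℂ)}
    (hF : IsModewiseSolution V u F) (j : Fin n) (m : ℤ) (K : ℕ) :
    MvPolynomial.pderiv u ((PowerSeries.coeff K (F j)).coeff m)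
        + MvPolynomial.C (Complex.I * m) * (PowerSeries.coeff K (F j)).coeff m
      = (if h : (j : ℕ) + 1 < n then (PowerSeries.coeff K (F ⟨j + 1, h⟩)).coeff m else 0)
        + (PowerSeries.coeff K (PowerSeries.X * VEval _ (V j) F)).coeff m := by
  have h := congrArg (PowerSeries.coeff K) (hF j m)
  rw [map_add, map_add, PowerSeries.coeff_C_mul, Derivation.coeff_mapPowerSeries,
    coeff_modeSeries, coeff_modeSeries, apply_dite (PowerSeries.coeff K)] at h
  simpa only [coeff_modeSeries, map_zero] using h

theorem Derivation.mapPowerSeries_substSeries {u : τ} {v : σ}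
    (φ : MvPolynomial τ ℂ →+* PowerSeries (MvPolynomial σ ℂ))
    (hD : ∀ p, (MvPolynomial.pderiv v).mapPowerSeries (φ p) = φ (MvPolynomial.pderiv u p))
    (p : PowerSeries (MvPolynomial τ ℂ)) :
    (MvPolynomial.pderiv v).mapPowerSeries (substSeries φ p)
      = substSeries φ ((MvPolynomial.pderiv u).mapPowerSeries p) := by
  ext K
  simp only [Derivation.coeff_mapPowerSeries, coeff_substSeries, map_sum, ← hD]

theorem IsModewiseSolution.map_substModes {u : τ} {F : Fin n → EpsSeries (MvPolynomial τ ℂ)}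
    (hF : IsModewiseSolution V u F) (v : σ)
    (φ : MvPolynomial τ ℂ →+* PowerSeries (MvPolynomial σ ℂ))
    (hC : ∀ c, φ (MvPolynomial.C c) = PowerSeries.C (MvPolynomial.C c))
    (hD : ∀ p, (MvPolynomial.pderiv v).mapPowerSeries (φ p) = φ (MvPolynomial.pderiv u p)) :
    IsModewiseSolution V v (fun j => substModes φ (F j)) := by
  intro j m
  have h := congrArg (substSeries φ) (hF j m)
  have hVEval : substModes φ (PowerSeries.X * VEval _ (V j) F)
      = PowerSeries.X * VEval _ (V j) (fun i => substModes φ (F i)) := by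
    rw [map_mul, substModes_X, substModes_VEval φ (fun c => by simp [hC]) (V j) F]
  rw [substSeries_add, substSeries_add, substSeries_mul, substSeries_C, hC,
    ← Derivation.mapPowerSeries_substSeries φ hD, ← modeSeries_substModes,
    ← modeSeries_substModes, hVEval, apply_dite (substSeries φ)] at h
  simpa only [← modeSeries_substModes, substSeries_zero] using h

theorem X_pow_dvd_X_mul_VEval_sub {R : Type} [CommRing R] [Algebra ℂ R] {K : ℕ}
    (W : MvPolynomial (Fin n) (Polynomial (AddMonoidAlgebra ℂ ℤ)))
    {y y' : Fin n → EpsSeries R} (h : ∀ i, PowerSeries.X ^ K ∣ y i - y' i) :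
    PowerSeries.X ^ (K + 1) ∣ PowerSeries.X * VEval R W y - PowerSeries.X * VEval R W y' := by
  rw [← mul_sub, pow_succ']
  exact mul_dvd_mul_left _ (X_pow_dvd_VEval_sub R W h)

theorem IsModewiseSolution.eq [DecidableEq σ] {u : σ} {F G : Fin n → EpsSeries (MvPolynomial σ ℂ)}
    (hF : IsModewiseSolution V u F) (hG : IsModewiseSolution V u G)
    (h0 : ∀ j, PowerSeries.map (evalVarZero u) (modeSeries (F j) 0)
      = PowerSeries.map (evalVarZero u) (modeSeries (G j) 0)) :
    F = G := by
  suffices h : ∀ K j, PowerSeries.coeff K (F j) = PowerSeries.coeff K (G j) from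
    funext fun j => PowerSeries.ext fun K => h K j
  intro K
  induction K using Nat.strong_induction_on with
  | _ K ih =>
  have hV : ∀ j, PowerSeries.coeff K (PowerSeries.X * VEval _ (V j) F)
      = PowerSeries.coeff K (PowerSeries.X * VEval _ (V j) G) := fun j => by
    have hdvd := X_pow_dvd_X_mul_VEval_sub (K := K) (V j) (y := F) (y' := G) fun i =>
      PowerSeries.X_pow_dvd_iff.mpr fun l hl => by rw [map_sub, ih l hl i, sub_self]
    rw [← sub_eq_zero, ← map_sub]
    exact PowerSeries.X_pow_dvd_iff.mp hdvd K (Nat.lt_succ_self K)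
  refine Fin.decreasingInduction fun j hnext => AddMonoidAlgebra.ext (Finsupp.ext fun m => ?_)
  set a := (PowerSeries.coeff K (F j)).coeff m - (PowerSeries.coeff K (G j)).coeff m with ha
  have hnext' : (if h : (j : ℕ) + 1 < n then (PowerSeries.coeff K (F ⟨j + 1, h⟩)).coeff m else 0)
      = (if h : (j : ℕ) + 1 < n then (PowerSeries.coeff K (G ⟨j + 1, h⟩)).coeff m else 0) := by
    split_ifs with h
    · rw [hnext h]
    · rfl
  have hode : MvPolynomial.pderiv u a + MvPolynomial.C (Complex.I * m) * a = 0 := by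
    have e := hF.coeff_eq j m K
    rw [hnext', hV j, ← hG.coeff_eq j m K] at e
    rw [ha, map_sub]
    linear_combination e
  rw [← sub_eq_zero]
  rcases eq_or_ne m 0 with rfl | hm
  · rw [Int.cast_zero, mul_zero, map_zero, zero_mul, add_zero] at hode
    have hinit := congrArg (PowerSeries.coeff K) (h0 j)
    rw [PowerSeries.coeff_map, PowerSeries.coeff_map, coeff_modeSeries, coeff_modeSeries,
      ← sub_eq_zero, ← map_sub, ← ha, evalVarZero_eq_self_of_pderiv_eq_zero hode] at hinit
    exact hinit
  · exact eq_zero_of_pderiv_add_C_mul_eq_zero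
      (mul_ne_zero Complex.I_ne_zero (Int.cast_ne_zero.mpr hm)) hode

end ModewiseSolutions

section Substitutions

variable {n : ℕ}

/-- The shift `t ↦ t + s`. -/
def shiftTS (n : ℕ) : AmpRing n →+* AmpRing2 n :=
  MvPolynomial.eval₂Hom MvPolynomial.C fun v =>
    Option.elim v (MvPolynomial.X none + MvPolynomial.X (some none))
      (fun i => MvPolynomial.X (some (some i)))

/-- The evaluation `t ↦ 0`. -/
def evalT0 (n : ℕ) : AmpRing n →+* AmpRing n :=
  (MvPolynomial.aeval (fun v : Option (Fin n) =>
    Option.elim v (0 : AmpRing n) (fun i => MvPolynomial.X (some i)))).toRingHom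

/-- The evaluation `s ↦ -t`. -/
def evalST (n : ℕ) : AmpRing2 n →+* AmpRing n :=
  MvPolynomial.eval₂Hom MvPolynomial.C fun v =>
    Option.elim v (MvPolynomial.X none)
      (fun w => Option.elim w (-MvPolynomial.X none) (fun i => MvPolynomial.X (some i)))

theorem evalS0_comp_shiftTS : evalS0.comp (shiftTS n) = RingHom.id (AmpRing n) := by
  refine MvPolynomial.ringHom_ext (fun c => ?_) (fun v => ?_)
  · simp [shiftTS, evalS0]
  · rcases v with _ | i <;> simp [shiftTS, evalS0]

theorem evalS0_comp_embedTA : evalS0.comp embedTA = RingHom.id (AmpRing n) := by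
  refine MvPolynomial.ringHom_ext (fun c => ?_) (fun v => ?_)
  · simp [embedTA, evalS0]
  · rcases v with _ | i <;> simp [embedTA, evalS0]

theorem evalST_comp_shiftTS : (evalST n).comp (shiftTS n) = evalT0 n := by
  refine MvPolynomial.ringHom_ext (fun c => ?_) (fun v => ?_)
  · simp [shiftTS, evalST, evalT0]
  · rcases v with _ | i <;> simp [shiftTS, evalST, evalT0]

theorem evalST_comp_embedTA : (evalST n).comp embedTA = RingHom.id (AmpRing n) := by
  refine MvPolynomial.ringHom_ext (fun c => ?_) (fun v => ?_)
  · simp [embedTA, evalST]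
  · rcases v with _ | i <;> simp [embedTA, evalST]

theorem embedTA_comp_evalS0 :
    embedTA.comp evalS0 = evalVarZero (some none : Option (Option (Fin n))) := by
  refine MvPolynomial.ringHom_ext (fun c => ?_) (fun v => ?_)
  · simp [embedTA, evalS0, evalVarZero]
  · rcases v with _ | _ | i <;> simp [embedTA, evalS0, evalVarZero]

theorem map_evalST_comp_substSA0 (Q : Fin n → EpsSeries (AmpRing n)) :
    (PowerSeries.map (evalST n)).comp (substSA0 Q) = substInv0 Q := by
  refine MvPolynomial.ringHom_ext (fun c => ?_) (fun v => ?_)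
  · simp [substSA0, substInv0, evalST]
  · rcases v with _ | i
    · simp [substSA0, substInv0, evalST]
    · simp [substSA0, substInv0, PowerSeries.map_map, evalST_comp_embedTA]

theorem map_evalS0_comp_substSA0 (Q : Fin n → EpsSeries (AmpRing n)) :
    (PowerSeries.map evalS0).comp (substSA0 Q) = (substInv0 Q).comp (evalT0 n) := by
  refine MvPolynomial.ringHom_ext (fun c => ?_) (fun v => ?_)
  · simp [substSA0, substInv0, evalS0, evalT0]
  · rcases v with _ | i
    · simp [substSA0, substInv0, evalS0, evalT0]
    · simp [substSA0, substInv0, evalT0, PowerSeries.map_map, evalS0_comp_embedTA]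

end Substitutions

section Derivatives

variable {n : ℕ}

theorem dS_eq (p : PowerSeries (AmpRing2 n)) :
    dS p = (MvPolynomial.pderiv (some none)).mapPowerSeries p := by
  ext k
  rw [dS, PowerSeries.coeff_mk, Derivation.coeff_mapPowerSeries]

theorem dT_eq (p : PowerSeries (AmpRing n)) :
    dT p = (MvPolynomial.pderiv none).mapPowerSeries p := by
  ext k
  rw [dT, PowerSeries.coeff_mk, Derivation.coeff_mapPowerSeries]

theorem pderiv_shiftTS (p : AmpRing n) :
    MvPolynomial.pderiv (some none) (shiftTS n p) = shiftTS n (MvPolynomial.pderiv none p) := by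
  refine Derivation.apply_comp_eq_comp_pderiv _ _ (fun c => ?_) none (fun v => ?_) p
  · simp [shiftTS]
  · rcases v with _ | i <;> simp [shiftTS, MvPolynomial.pderiv_X]

theorem mapPowerSeries_embedTA (p : PowerSeries (AmpRing n)) :
    (MvPolynomial.pderiv (some none)).mapPowerSeries (PowerSeries.map embedTA p) = 0 := by
  classical
  refine PowerSeries.ext fun k => ?_
  rw [Derivation.coeff_mapPowerSeries, PowerSeries.coeff_map, map_zero]
  apply MvPolynomial.pderiv_eq_zero_of_notMem_vars
  intro h
  obtain ⟨v, -, hv⟩ := MvPolynomial.mem_vars_rename (Option.map some) (PowerSeries.coeff k p) h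
  cases v <;> simp at hv

theorem mapPowerSeries_substSA0 (Q : Fin n → EpsSeries (AmpRing n)) (p : AmpRing n) :
    (MvPolynomial.pderiv (some none)).mapPowerSeries (substSA0 Q p)
      = substSA0 Q (MvPolynomial.pderiv none p) := by
  refine Derivation.apply_comp_eq_comp_pderiv _ _ (fun c => ?_) none (fun v => ?_) p
  · simp [substSA0, PowerSeries.algebraMap_apply]
  · rcases v with _ | i
    · simp [substSA0, Derivation.mapPowerSeries_C]
    · simp [substSA0, mapPowerSeries_embedTA, MvPolynomial.pderiv_X]

end Derivatives

section InitialData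

variable {n : ℕ}

theorem pderiv_C_mul_X_mul_X_pow (c : ℂ) (i : Fin n) (e : ℕ) :
    MvPolynomial.pderiv none
        (MvPolynomial.C c * MvPolynomial.X (some i) * MvPolynomial.X none ^ e : AmpRing n)
      = MvPolynomial.C (c * e) * MvPolynomial.X (some i) * MvPolynomial.X none ^ (e - 1) := by
  rw [MvPolynomial.pderiv_mul, MvPolynomial.pderiv_mul, MvPolynomial.pderiv_C,
    MvPolynomial.pderiv_X_of_ne (by simp), MvPolynomial.pderiv_pow, MvPolynomial.pderiv_X_self,
    map_mul, map_natCast]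
  ring

theorem iterate_pderiv_gMv (j : ℕ) :
    (fun p => MvPolynomial.pderiv none p)^[j] (gMv n)
      = ∑ k : Fin n, if j ≤ (k : ℕ) then
          MvPolynomial.C ((1 : ℂ) / ((k : ℕ) - j).factorial)
            * MvPolynomial.X (some k) * MvPolynomial.X none ^ ((k : ℕ) - j) else 0 := by
  induction j with
  | zero => simp [gMv]
  | succ j ih =>
    rw [Function.iterate_succ_apply', ih, map_sum]
    refine Finset.sum_congr rfl fun k _ => ?_
    rcases lt_trichotomy j k with hjk | rfl | hjk
    · obtain ⟨d, hd⟩ : ∃ d, (k : ℕ) - j = d + 1 := ⟨(k : ℕ) - j - 1, by omega⟩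
      have hfac : (1 : ℂ) / (d + 1).factorial * ((d + 1 : ℕ) : ℂ) = 1 / d.factorial := by
        rw [Nat.factorial_succ, Nat.cast_mul]
        field_simp
      rw [if_pos hjk.le, if_pos (Nat.succ_le_of_lt hjk), pderiv_C_mul_X_mul_X_pow, hd,
        show (k : ℕ) - (j + 1) = d by omega, Nat.add_sub_cancel, hfac]
    · rw [if_pos le_rfl, if_neg (by omega), Nat.sub_self, pow_zero, mul_one,
        MvPolynomial.pderiv_mul, MvPolynomial.pderiv_C, MvPolynomial.pderiv_X_of_ne (by simp)]
      simp
    · rw [if_neg (by omega), if_neg (by omega), map_zero]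

theorem evalT0_iterate_pderiv_gMv (j : Fin n) :
    evalT0 n ((fun p => MvPolynomial.pderiv none p)^[(j : ℕ)] (gMv n))
      = MvPolynomial.X (some j) := by
  rw [iterate_pderiv_gMv, map_sum, Finset.sum_eq_single j]
  · simp [evalT0]
  · intro k _ hkj
    split_ifs with hjk
    · have hpos : (k : ℕ) - j ≠ 0 := by
        have : (j : ℕ) ≠ k := fun h => hkj (Fin.ext h.symm)
        omega
      simp [evalT0, zero_pow hpos]
    · exact map_zero _
  · simp

theorem IsNilpotentSecularFamily.map_evalT0_Pc
    {V : Fin n → MvPolynomial (Fin n) (Polynomial (AddMonoidAlgebra ℂ ℤ))}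
    {Q : Fin n → EpsSeries (AmpRing n)} (hQ : IsNilpotentSecularFamily V Q) (j : Fin n) :
    PowerSeries.map (evalT0 n) (Pc Q j 0) = PowerSeries.C (MvPolynomial.X (some j)) := by
  refine PowerSeries.ext fun k => ?_
  rw [PowerSeries.coeff_map, Pc_eq_modeSeries, coeff_modeSeries, PowerSeries.coeff_C]
  rcases Nat.eq_zero_or_pos k with rfl | hk
  · rw [if_pos rfl, hQ.coeff_zero j, AddMonoidAlgebra.coeff_single, Finsupp.single_eq_same]
    exact evalT0_iterate_pderiv_gMv j
  · rw [if_neg hk.ne']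
    exact hQ.resonant_vanish j k hk

end InitialData

theorem map_evalS0_dS_map_shiftTS {n : ℕ} (p : PowerSeries (AmpRing n)) :
    PowerSeries.map evalS0 (dS (PowerSeries.map (shiftTS n) p)) = dT p := by
  refine PowerSeries.ext fun k => ?_
  rw [PowerSeries.coeff_map, dS_eq, dT_eq, Derivation.coeff_mapPowerSeries,
    Derivation.coeff_mapPowerSeries, PowerSeries.coeff_map, pderiv_shiftTS,
    ← RingHom.comp_apply, evalS0_comp_shiftTS, RingHom.id_apply]

namespace IsNilpotentSecularFamily

variable {n : ℕ} {V : Fin n → MvPolynomial (Fin n) (Polynomial (AddMonoidAlgebra ℂ ℤ))}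
  {Q : Fin n → EpsSeries (AmpRing n)}

theorem dT_Pc_zero (hQ : IsNilpotentSecularFamily V Q) (j : Fin n) :
    dT (Pc Q j 0) = PcNext Q j 0 + PowerSeries.X * modeSeries (VEval (AmpRing n) (V j) Q) 0 := by
  have h := hQ.isModewiseSolution j 0
  rw [Int.cast_zero, mul_zero, map_zero, map_zero, zero_mul, add_zero, modeSeries_X_mul] at h
  rw [dT_eq]
  exact h

theorem map_evalS0_substSeries_substSA0 (hQ : IsNilpotentSecularFamily V Q) (j : Fin n) :
    PowerSeries.map evalS0 (substSeries (substSA0 Q) (Pc Q j 0)) = Pc Q j 0 := by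
  rw [map_substSeries, map_evalS0_comp_substSA0, substSeries_comp, hQ.map_evalT0_Pc,
    substSeries_C]
  simp [substInv0]

/-- The semigroup property `P_{j,0}(ε, s, 𝒜(ε,t,A)) = P_{j,0}(ε, t + s, A)`. -/
theorem substSeries_substSA0_Pc (hQ : IsNilpotentSecularFamily V Q) (j : Fin n) :
    substSeries (substSA0 Q) (Pc Q j 0) = PowerSeries.map (shiftTS n) (Pc Q j 0) := by
  have hsubst := hQ.isModewiseSolution.map_substModes (some none) (substSA0 Q)
    (fun c => by simp [substSA0]) (mapPowerSeries_substSA0 Q)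
  have hshift := hQ.isModewiseSolution.map_substModes (some none)
    (PowerSeries.C.comp (shiftTS n)) (fun c => by simp [shiftTS]) (fun p => by
      rw [RingHom.comp_apply, RingHom.comp_apply, Derivation.mapPowerSeries_C, pderiv_shiftTS])
  have h := congrArg (fun F => modeSeries (F j) 0) (hsubst.eq hshift fun i => ?_)
  · simpa only [modeSeries_substModes, substSeries_C_comp, ← Pc_eq_modeSeries] using h
  · rw [modeSeries_substModes, modeSeries_substModes, substSeries_C_comp, ← Pc_eq_modeSeries,
      ← embedTA_comp_evalS0, PowerSeries.map_map (shiftTS n), RingHom.comp_assoc,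
      evalS0_comp_shiftTS, RingHom.comp_id, ← PowerSeries.map_map,
      hQ.map_evalS0_substSeries_substSA0]

theorem substSeries_substInv0_Pc (hQ : IsNilpotentSecularFamily V Q) (j : Fin n) :
    substSeries (substInv0 Q) (Pc Q j 0) = PowerSeries.C (MvPolynomial.X (some j)) := by
  rw [← map_evalST_comp_substSA0, ← map_substSeries, hQ.substSeries_substSA0_Pc,
    PowerSeries.map_map, evalST_comp_shiftTS, hQ.map_evalT0_Pc]

end IsNilpotentSecularFamily

theorem nilpotent_RG_and_inversion_general {n : ℕ}
    (V : Fin n → MvPolynomial (Fin n) (Polynomial (AddMonoidAlgebra ℂ ℤ)))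
    (Q : Fin n → EpsSeries (AmpRing n))
    (hQ : IsNilpotentSecularFamily V Q) :
    ∀ j : Fin n,
      dT (Pc Q j 0)
          = PowerSeries.map evalS0 (dS (substSeries (substSA0 Q) (Pc Q j 0)))
        ∧ (∃ E : PowerSeries (AmpRing n),
            PowerSeries.map evalS0 (dS (substSeries (substSA0 Q) (Pc Q j 0)))
              = PcNext Q j 0 + PowerSeries.X * E)
        ∧ substSeries (substInv0 Q) (Pc Q j 0)
            = PowerSeries.C (R := AmpRing n) (MvPolynomial.X (some j)) := by
  intro j
  have hRG : PowerSeries.map evalS0 (dS (substSeries (substSA0 Q) (Pc Q j 0))) = dT (Pc Q j 0) := by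
    rw [hQ.substSeries_substSA0_Pc, map_evalS0_dS_map_shiftTS]
  refine ⟨hRG.symm, ⟨modeSeries (VEval (AmpRing n) (V j) Q) 0, ?_⟩, hQ.substSeries_substInv0_Pc j⟩
  rw [hRG, hQ.dT_Pc_zero]

/-- RG equation, non-slow dynamics and inversion; nilpotent case: the
renormalized amplitudes `𝒜_j(ε,t,A) = P_{j,0}(ε,t,A)` satisfy
(1) `∂_t 𝒜_j(ε,t,A) = [∂_s P_{j,0}(ε, s, 𝒜(ε,t,A))]|_{s=0}` in `ℂ[t,A][[ε]]`;
(2) the right-hand side equals `𝒜_{j+1}(ε,t,A)` (with `𝒜_{n+1} := 0`) plus a series divisible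
by `ε`;
(3) `P_{j,0}(ε, -t, 𝒜(ε,t,A)) = A_j` in `ℂ[t,A][[ε]]`. -/
theorem nilpotent_RG_and_inversion {n : ℕ} (hn : 0 < n)
    (V : Fin n → MvPolynomial (Fin n) (Polynomial (AddMonoidAlgebra ℂ ℤ)))
    (Q : Fin n → EpsSeries (AmpRing n))
    (hQ : IsNilpotentSecularFamily V Q) :
    ∀ j : Fin n,
      dT (Pc Q j 0)
          = PowerSeries.map evalS0 (dS (substSeries (substSA0 Q) (Pc Q j 0)))
        ∧ (∃ E : PowerSeries (AmpRing n),
            PowerSeries.map evalS0 (dS (substSeries (substSA0 Q) (Pc Q j 0)))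
              = PcNext Q j 0 + PowerSeries.X * E)
        ∧ substSeries (substInv0 Q) (Pc Q j 0)
            = PowerSeries.C (R := AmpRing n) (MvPolynomial.X (some j)) :=
  nilpotent_RG_and_inversion_general V Q hQ
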